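/- Let f : I → ℝ³ be a unit speed timelike curve on S²₁ with 0 ∈ I, let a > 0 and ξ ∈ (−π/2, π/2) with ξ ≠ 0 be constants, assume 1 + tan ξ·κ_g(v) > 0 for all v ∈ I, and define γ̃(v) = a∫₀^v f(t)dt + a·tan ξ·∫₀^v f(t) ×ₗ f'(t) dt. Then γ̃ is a spacelike Bertrand curve: with the nonzero constants A = a and B = −a·tan ξ one has A·κ(v) + B·τ(v) = 1 for all v ∈ I, where κ and τ denote the curvature and torsion of γ̃. -/

import Mathlib

noncomputable section

/-- Minkowski inner product ⟪x,y⟫ = x₁y₁ + x₂y₂ − x₃y₃ on ℝ³. -/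
def mdot (x y : Fin 3 → ℝ) : ℝ := x 0 * y 0 + x 1 * y 1 - x 2 * y 2

/-- Lorentzian cross product x ×ₗ y. -/
def lcross (x y : Fin 3 → ℝ) : Fin 3 → ℝ :=
  ![x 1 * y 2 - x 2 * y 1, x 2 * y 0 - x 0 * y 2, x 1 * y 0 - x 0 * y 1]

/-- Determinant of the 3×3 matrix with rows x, y, z. -/
def det3 (x y z : Fin 3 → ℝ) : ℝ :=
  x 0 * (y 1 * z 2 - y 2 * z 1) - x 1 * (y 0 * z 2 - y 2 * z 0) + x 2 * (y 0 * z 1 - y 1 * z 0)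

/-- Minkowski norm ‖x‖ = √|⟪x,x⟫|. -/
def mnorm (x : Fin 3 → ℝ) : ℝ := Real.sqrt |mdot x x|

/- ## Auxiliary algebraic identities -/

lemma I2 (x y z : Fin 3 → ℝ) : mdot (lcross x y) z = det3 x y z := by
  simp [mdot, lcross, det3]; ring

lemma I1 (x y z : Fin 3 → ℝ) :
    lcross x (lcross y z) = mdot x y • z - mdot x z • y := by
  funext i
  fin_cases i <;> simp [mdot, lcross, Pi.sub_apply, Pi.smul_apply, smul_eq_mul] <;> ring

lemma I3 (a b c d : Fin 3 → ℝ) :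
    mdot (lcross a b) (lcross c d) = mdot a d * mdot b c - mdot a c * mdot b d := by
  simp [mdot, lcross]; ring

lemma mdot_comm (x y : Fin 3 → ℝ) : mdot x y = mdot y x := by simp [mdot]; ring
lemma mdot_subl (x y z : Fin 3 → ℝ) : mdot (x - y) z = mdot x z - mdot y z := by
  simp [mdot]; ring
lemma mdot_addl (x y z : Fin 3 → ℝ) : mdot (x + y) z = mdot x z + mdot y z := by
  simp [mdot]; ring
lemma mdot_addr (x y z : Fin 3 → ℝ) : mdot x (y + z) = mdot x y + mdot x z := by
  simp [mdot]; ring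
lemma mdot_smull (a : ℝ) (x y : Fin 3 → ℝ) : mdot (a • x) y = a * mdot x y := by
  simp [mdot]; ring
lemma mdot_smulr (a : ℝ) (x y : Fin 3 → ℝ) : mdot x (a • y) = a * mdot x y := by
  simp [mdot]; ring
lemma mdot_negr (x y : Fin 3 → ℝ) : mdot x (-y) = - mdot x y := by
  simp [mdot]; ring
lemma lcross_addl (x y z : Fin 3 → ℝ) : lcross (x + y) z = lcross x z + lcross y z := by
  funext i; fin_cases i <;> simp [lcross] <;> ring
lemma lcross_addr (x y z : Fin 3 → ℝ) : lcross x (y + z) = lcross x y + lcross x z := by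
  funext i; fin_cases i <;> simp [lcross] <;> ring
lemma lcross_smull (a : ℝ) (x y : Fin 3 → ℝ) : lcross (a • x) y = a • lcross x y := by
  funext i; fin_cases i <;> simp [lcross] <;> ring
lemma lcross_smulr (a : ℝ) (x y : Fin 3 → ℝ) : lcross x (a • y) = a • lcross x y := by
  funext i; fin_cases i <;> simp [lcross] <;> ring
lemma lcross_self (x : Fin 3 → ℝ) : lcross x x = 0 := by
  funext i; fin_cases i <;> simp [lcross] <;> ring
lemma lcross_zero (x : Fin 3 → ℝ) : lcross x 0 = 0 := by
  funext i; fin_cases i <;> simp [lcross]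
lemma lcross_anti (x y : Fin 3 → ℝ) : lcross x y = - lcross y x := by
  funext i; fin_cases i <;> simp [lcross] <;> ring
lemma det3_aba (x y : Fin 3 → ℝ) : det3 x y x = 0 := by simp [det3]; ring
lemma det3_abb (x y : Fin 3 → ℝ) : det3 x y y = 0 := by simp [det3]; ring
lemma det3_cycle (x y z : Fin 3 → ℝ) : det3 y z x = det3 x y z := by simp [det3]; ring

/-- Basis expansion on the pseudo-orthonormal frame u, p, u×ₗp. -/
lemma basis_expand (u p z : Fin 3 → ℝ) (h1 : mdot u u = 1) (h2 : mdot p p = -1)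
    (h3 : mdot u p = 0) (h4 : mdot u z = 1) (h5 : mdot p z = 0) :
    z = u + det3 u p z • lcross u p := by
  set s := lcross u p with hs
  set k := det3 u p z with hk
  set δ : Fin 3 → ℝ := z - (u + k • s) with hδ
  have hss : mdot s s = 1 := by
    rw [hs, I3, mdot_comm p u, h1, h2, h3]; ring
  have hsu : mdot s u = 0 := by rw [hs, I2, det3_aba]
  have hsp : mdot s p = 0 := by rw [hs, I2, det3_abb]
  have hsz : mdot s z = k := by rw [hs, I2, hk]
  have hδu : mdot δ u = 0 := by
    rw [hδ, mdot_subl, mdot_addl, mdot_smull, mdot_comm z u, h4, h1, hsu]; ring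
  have hδp : mdot δ p = 0 := by
    rw [hδ, mdot_subl, mdot_addl, mdot_smull, mdot_comm z p, h5, h3, hsp]; ring
  have hsδ : mdot s δ = 0 := by
    rw [hδ, mdot_comm s _, mdot_subl, mdot_addl, mdot_smull, mdot_comm z s, hsz,
      mdot_comm u s, hsu, mdot_comm s s, hss]; ring
  have hcross : lcross s δ = 0 := by
    have h : lcross δ s = mdot δ u • p - mdot δ p • u := by rw [hs, I1]
    rw [hδu, hδp] at h
    simp at h
    rw [lcross_anti, h, neg_zero]
  have h0 : (0 : Fin 3 → ℝ) = mdot s s • δ - mdot s δ • s := by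
    rw [← I1, hcross, lcross_zero]
  rw [hss, hsδ] at h0
  simp at h0
  exact sub_eq_zero.mp h0.symm

/- ## Calculus helpers -/

lemma hasDerivAt_lcross {F G : ℝ → Fin 3 → ℝ} {F' G' : Fin 3 → ℝ} {x : ℝ}
    (hF : HasDerivAt F F' x) (hG : HasDerivAt G G' x) :
    HasDerivAt (fun w => lcross (F w) (G w)) (lcross F' (G x) + lcross (F x) G') x := by
  have hFi : ∀ i, HasDerivAt (fun w => F w i) (F' i) x := hasDerivAt_pi.1 hF
  have hGi : ∀ i, HasDerivAt (fun w => G w i) (G' i) x := hasDerivAt_pi.1 hG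
  rw [hasDerivAt_pi]
  intro i
  fin_cases i <;>
  · simp only [lcross, Pi.add_apply, Matrix.cons_val_zero, Matrix.cons_val_one,
      Matrix.head_cons, Matrix.cons_val_two, Matrix.tail_cons]
    first
    | exact (((hFi 1).mul (hGi 2)).sub ((hFi 2).mul (hGi 1))).congr_deriv
        (by simp [lcross]; ring)
    | exact (((hFi 2).mul (hGi 0)).sub ((hFi 0).mul (hGi 2))).congr_deriv
        (by simp [lcross]; ring)
    | exact (((hFi 1).mul (hGi 0)).sub ((hFi 0).mul (hGi 1))).congr_deriv
        (by simp [lcross]; ring)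

lemma hasDerivAt_mdot {F G : ℝ → Fin 3 → ℝ} {F' G' : Fin 3 → ℝ} {x : ℝ}
    (hF : HasDerivAt F F' x) (hG : HasDerivAt G G' x) :
    HasDerivAt (fun w => mdot (F w) (G w)) (mdot F' (G x) + mdot (F x) G') x := by
  have hFi : ∀ i, HasDerivAt (fun w => F w i) (F' i) x := hasDerivAt_pi.1 hF
  have hGi : ∀ i, HasDerivAt (fun w => G w i) (G' i) x := hasDerivAt_pi.1 hG
  simp only [mdot]
  exact ((((hFi 0).mul (hGi 0)).add ((hFi 1).mul (hGi 1))).sub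
    ((hFi 2).mul (hGi 2))).congr_deriv (by ring)

/-- γ̃(v) = a∫₀^v f + a·tanξ·∫₀^v f ×ₗ f' (with a > 0, ξ ≠ 0, 1 + tanξ·κ_g > 0 on I) is a
spacelike Bertrand curve: with the nonzero constants A = a, B = −a·tanξ one has
A·κ + B·τ = 1 on I. -/
theorem stmt_11 (a b : ℝ) (f : ℝ → Fin 3 → ℝ)
    (hf : ContDiffOn ℝ (⊤ : ℕ∞) f (Set.Ioo a b))
    (hsph : ∀ v ∈ Set.Ioo a b, mdot (f v) (f v) = 1)
    (htl : ∀ v ∈ Set.Ioo a b, mdot (deriv f v) (deriv f v) = -1)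
    (h0 : (0 : ℝ) ∈ Set.Ioo a b)
    (t : ℝ → Fin 3 → ℝ) (kg : ℝ → ℝ)
    (ht : t = fun w => deriv f w)
    (hkg : kg = fun w => det3 (f w) (t w) (deriv t w))
    (A ξ : ℝ) (hA : 0 < A) (hξ : ξ ∈ Set.Ioo (-(Real.pi / 2)) (Real.pi / 2))
    (hξ0 : ξ ≠ 0)
    (hpos : ∀ v ∈ Set.Ioo a b, 0 < 1 + Real.tan ξ * kg v)
    (γ : ℝ → Fin 3 → ℝ)
    (hγ : ∀ v ∈ Set.Ioo a b,
      γ v = A • (∫ w in (0:ℝ)..v, f w)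
          + (A * Real.tan ξ) • (∫ w in (0:ℝ)..v, lcross (f w) (deriv f w)))
    (K T : ℝ → ℝ)
    (hK : K = fun v => mnorm (lcross (deriv γ v) (deriv (deriv γ) v))
        / Real.sqrt (mdot (deriv γ v) (deriv γ v)) ^ 3)
    (hT : T = fun v => det3 (deriv γ v) (deriv (deriv γ) v) (deriv (deriv (deriv γ)) v)
        / mnorm (lcross (deriv γ v) (deriv (deriv γ) v)) ^ 2) :
    A ≠ 0 ∧ -(A * Real.tan ξ) ≠ 0 ∧
    ∀ v ∈ Set.Ioo a b, A * K v + (-(A * Real.tan ξ)) * T v = 1 := by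
  have hπ0 : (0 : ℝ) ∈ Set.Ioo (-(Real.pi / 2)) (Real.pi / 2) :=
    ⟨by simpa using Real.pi_div_two_pos, Real.pi_div_two_pos⟩
  have htanne : Real.tan ξ ≠ 0 := by
    intro h
    exact hξ0 (Real.injOn_tan hξ hπ0 (by rw [h, Real.tan_zero]))
  refine ⟨ne_of_gt hA, by simp [htanne, ne_of_gt hA], ?_⟩
  subst hK hT
  set q := Real.tan ξ with hqdef
  set S := Set.Ioo a b with hSdef
  have hSo : IsOpen S := isOpen_Ioo
  set f1 := deriv f with hf1def
  set f2 := deriv f1 with hf2def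
  set f3 := deriv f2 with hf3def
  -- smoothness of derivatives
  have hf1S : ContDiffOn ℝ (⊤ : ℕ∞) f1 S := hf.deriv_of_isOpen hSo (by simp)
  have hf2S : ContDiffOn ℝ (⊤ : ℕ∞) f2 S := hf1S.deriv_of_isOpen hSo (by simp)
  have hdf : ∀ x ∈ S, HasDerivAt f (f1 x) x := fun x hx =>
    ((hf.contDiffAt (hSo.mem_nhds hx)).differentiableAt (by simp)).hasDerivAt
  have hdf1 : ∀ x ∈ S, HasDerivAt f1 (f2 x) x := fun x hx =>
    ((hf1S.contDiffAt (hSo.mem_nhds hx)).differentiableAt (by simp)).hasDerivAt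
  have hdf2 : ∀ x ∈ S, HasDerivAt f2 (f3 x) x := fun x hx =>
    ((hf2S.contDiffAt (hSo.mem_nhds hx)).differentiableAt (by simp)).hasDerivAt
  -- derivative of a function constant on S vanishes
  have derivS : ∀ (φ : ℝ → ℝ) (c : ℝ), ∀ x ∈ S, ∀ (D : ℝ),
      HasDerivAt φ D x → (∀ y ∈ S, φ y = c) → D = 0 := by
    intro φ c x hx D hD hconst
    have h1 : φ =ᶠ[nhds x] fun _ => c :=
      Filter.eventuallyEq_of_mem (hSo.mem_nhds hx) hconst
    exact hD.unique ((hasDerivAt_const x c).congr_of_eventuallyEq h1)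
  -- pointwise constraints
  have c3 : ∀ x ∈ S, mdot (f x) (f1 x) = 0 := by
    intro x hx
    have hD := hasDerivAt_mdot (hdf x hx) (hdf x hx)
    have h := derivS _ 1 x hx _ hD hsph
    rw [mdot_comm (f1 x) (f x)] at h
    linarith
  have c4 : ∀ x ∈ S, mdot (f x) (f2 x) = 1 := by
    intro x hx
    have hD := hasDerivAt_mdot (hdf x hx) (hdf1 x hx)
    have h := derivS _ 0 x hx _ hD c3
    have h2 := htl x hx
    linarith
  have c5 : ∀ x ∈ S, mdot (f1 x) (f2 x) = 0 := by
    intro x hx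
    have hD := hasDerivAt_mdot (hdf1 x hx) (hdf1 x hx)
    have h := derivS _ (-1) x hx _ hD htl
    rw [mdot_comm (f2 x) (f1 x)] at h
    linarith
  have c6 : ∀ x ∈ S, mdot (f x) (f3 x) = 0 := by
    intro x hx
    have hD := hasDerivAt_mdot (hdf x hx) (hdf2 x hx)
    have h := derivS _ 1 x hx _ hD c4
    have h2 := c5 x hx
    linarith
  have c7 : ∀ x ∈ S, mdot (f2 x) (f2 x) + mdot (f1 x) (f3 x) = 0 := by
    intro x hx
    have hD := hasDerivAt_mdot (hdf1 x hx) (hdf2 x hx)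
    have h := derivS _ 0 x hx _ hD c5
    linarith
  -- derivatives of γ
  set g : ℝ → Fin 3 → ℝ := fun x => lcross (f x) (f1 x) with hgdef
  have hgd : ∀ x ∈ S, HasDerivAt g (lcross (f1 x) (f1 x) + lcross (f x) (f2 x)) x :=
    fun x hx => hasDerivAt_lcross (hdf x hx) (hdf1 x hx)
  have hfc : ContinuousOn f S := hf.continuousOn
  have hgc : ContinuousOn g S :=
    fun x hx => ((hgd x hx).continuousAt).continuousWithinAt
  have hIf : ∀ x ∈ S, HasDerivAt (fun y => ∫ w in (0:ℝ)..y, f w) (f x) x := by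
    intro x hx
    have hsub : Set.uIcc (0:ℝ) x ⊆ S := Set.ordConnected_Ioo.uIcc_subset h0 hx
    exact intervalIntegral.integral_hasDerivAt_right
      ((hfc.mono hsub).intervalIntegrable)
      (hfc.stronglyMeasurableAtFilter hSo x hx)
      (hfc.continuousAt (hSo.mem_nhds hx))
  have hIg : ∀ x ∈ S, HasDerivAt (fun y => ∫ w in (0:ℝ)..y, g w) (g x) x := by
    intro x hx
    have hsub : Set.uIcc (0:ℝ) x ⊆ S := Set.ordConnected_Ioo.uIcc_subset h0 hx
    exact intervalIntegral.integral_hasDerivAt_right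
      ((hgc.mono hsub).intervalIntegrable)
      (hgc.stronglyMeasurableAtFilter hSo x hx)
      (hgc.continuousAt (hSo.mem_nhds hx))
  have hdγ : ∀ x ∈ S, HasDerivAt γ (A • f x + (A * q) • g x) x := by
    intro x hx
    have hG : HasDerivAt
        (fun y => A • (∫ w in (0:ℝ)..y, f w) + (A * q) • (∫ w in (0:ℝ)..y, g w))
        (A • f x + (A * q) • g x) x :=
      ((hIf x hx).const_smul A).add ((hIg x hx).const_smul (A * q))
    refine hG.congr_of_eventuallyEq ?_
    exact Filter.eventuallyEq_of_mem (hSo.mem_nhds hx) (fun y hy => hγ y hy)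
  have hd1 : ∀ x ∈ S, deriv γ x = A • f x + (A * q) • g x :=
    fun x hx => (hdγ x hx).deriv
  have hγ1d : ∀ x ∈ S, HasDerivAt (fun y => A • f y + (A * q) • g y)
      (A • f1 x + (A * q) • (lcross (f1 x) (f1 x) + lcross (f x) (f2 x))) x :=
    fun x hx => ((hdf x hx).const_smul A).add ((hgd x hx).const_smul (A * q))
  have hd2 : ∀ x ∈ S, deriv (deriv γ) x
      = A • f1 x + (A * q) • (lcross (f1 x) (f1 x) + lcross (f x) (f2 x)) := by
    intro x hx
    have heq : deriv γ =ᶠ[nhds x] fun y => A • f y + (A * q) • g y :=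
      Filter.eventuallyEq_of_mem (hSo.mem_nhds hx) hd1
    rw [heq.deriv_eq]
    exact (hγ1d x hx).deriv
  have hγ2d : ∀ x ∈ S, HasDerivAt
      (fun y => A • f1 y + (A * q) • (lcross (f1 y) (f1 y) + lcross (f y) (f2 y)))
      (A • f2 x + (A * q) • ((lcross (f2 x) (f1 x) + lcross (f1 x) (f2 x))
        + (lcross (f1 x) (f2 x) + lcross (f x) (f3 x)))) x :=
    fun x hx => ((hdf1 x hx).const_smul A).add
      (((hasDerivAt_lcross (hdf1 x hx) (hdf1 x hx)).add
        (hasDerivAt_lcross (hdf x hx) (hdf2 x hx))).const_smul (A * q))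
  have hd3 : ∀ x ∈ S, deriv (deriv (deriv γ)) x
      = A • f2 x + (A * q) • ((lcross (f2 x) (f1 x) + lcross (f1 x) (f2 x))
        + (lcross (f1 x) (f2 x) + lcross (f x) (f3 x))) := by
    intro x hx
    have heq : deriv (deriv γ) =ᶠ[nhds x]
        fun y => A • f1 y + (A * q) • (lcross (f1 y) (f1 y) + lcross (f y) (f2 y)) :=
      Filter.eventuallyEq_of_mem (hSo.mem_nhds hx) hd2
    rw [heq.deriv_eq]
    exact (hγ2d x hx).deriv
  -- main pointwise computation
  intro v hv
  have hP0 : 0 < 1 + q * det3 (f v) (f1 v) (f2 v) := by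
    have hh := hpos v hv
    have hkgv : kg v = det3 (f v) (f1 v) (f2 v) := by rw [hkg, ht]
    rwa [hkgv] at hh
  have C1 := hsph v hv
  have C2 := htl v hv
  have C3 := c3 v hv
  have C4 := c4 v hv
  have C5 := c5 v hv
  have C6 := c6 v hv
  have C7 := c7 v hv
  have hz : f2 v = f v + det3 (f v) (f1 v) (f2 v) • lcross (f v) (f1 v) :=
    basis_expand _ _ _ C1 C2 C3 C4 C5
  have hX : deriv γ v = A • f v + (A * q) • lcross (f v) (f1 v) := by
    rw [hd1 v hv, hgdef]
  have hd2v := hd2 v hv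
  have hd3v := hd3 v hv
  set u := f v with hu
  set p := f1 v with hp
  set z := f2 v with hzv
  set w := f3 v with hwv
  set k := det3 u p z with hk
  set s := lcross u p with hs
  -- scalar facts
  have hss : mdot s s = 1 := by rw [hs, I3, mdot_comm p u, C1, C2, C3]; ring
  have hsu : mdot s u = 0 := by rw [hs, I2, det3_aba]
  have hus : mdot u s = 0 := by rw [mdot_comm u s]; exact hsu
  have hsp : mdot s p = 0 := by rw [hs, I2, det3_abb]
  have hps : mdot p s = 0 := by rw [mdot_comm p s]; exact hsp
  have hsz : mdot s z = k := by rw [hs, I2]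
  have hzz : mdot z z = 1 + k ^ 2 := by
    rw [hz]
    simp only [mdot_addl, mdot_addr, mdot_smull, mdot_smulr, C1, hus, hsu, hss]
    ring
  have hlus : lcross u s = p := by
    rw [hs, I1, C1, C3]; module
  have hlsp : lcross s p = -u := by
    have h1 : lcross p s = u := by rw [hs, I1, mdot_comm p u, C3, C2]; module
    rw [lcross_anti s p, h1]
  have hY : deriv (deriv γ) v = (A * (1 + q * k)) • p := by
    rw [hd2v, lcross_self, hz, lcross_addr, lcross_smulr, lcross_self, hlus]
    module
  have hC : lcross (deriv γ v) (deriv (deriv γ) v)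
      = (A ^ 2 * (1 + q * k)) • s + (-(A ^ 2 * (1 + q * k) * q)) • u := by
    rw [hX, hY, lcross_addl, lcross_smull, lcross_smull, lcross_smulr, lcross_smulr,
      ← hs, hlsp]
    module
  have m1 : mdot (deriv γ v) (deriv γ v) = A ^ 2 * (1 + q ^ 2) := by
    rw [hX]
    simp only [mdot_addl, mdot_addr, mdot_smull, mdot_smulr, C1, hss, hsu, hus]
    ring
  have m2 : mdot (lcross (deriv γ v) (deriv (deriv γ) v))
      (lcross (deriv γ v) (deriv (deriv γ) v)) = (A ^ 2 * (1 + q * k)) ^ 2 * (1 + q ^ 2) := by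
    rw [hC]
    simp only [mdot_addl, mdot_addr, mdot_smull, mdot_smulr, mdot_negr, C1, hss, hsu, hus]
    ring
  have hspz : mdot s (lcross p z) = -1 := by
    rw [hs, I3, C4, C2, C3, C5]; ring
  have hupz : mdot u (lcross p z) = k := by
    rw [mdot_comm, I2, det3_cycle]
  have hpw : mdot p w = -(1 + k ^ 2) := by rw [hzz] at C7; linarith
  have hsuw : mdot s (lcross u w) = 1 + k ^ 2 := by
    rw [hs, I3, mdot_comm p u, C3, C1, C6, hpw]; ring
  have huuw : mdot u (lcross u w) = 0 := by rw [mdot_comm, I2, det3_aba]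
  have m3 : det3 (deriv γ v) (deriv (deriv γ) v) (deriv (deriv (deriv γ)) v)
      = A ^ 3 * (1 + q * k) ^ 2 * (k - q) := by
    rw [← I2, hC, hd3v, lcross_anti z p]
    simp only [mdot_addl, mdot_addr, mdot_smull, mdot_smulr, mdot_negr, hsz, hspz,
      hsuw, C4, hupz, huuw]
    ring
  -- final arithmetic
  have hQ : (0:ℝ) < 1 + q ^ 2 := by positivity
  set R := Real.sqrt (1 + q ^ 2) with hR
  have hR2 : R ^ 2 = 1 + q ^ 2 := Real.sq_sqrt hQ.le
  have hR0 : 0 < R := Real.sqrt_pos.mpr hQ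
  have hmn : mnorm (lcross (deriv γ v) (deriv (deriv γ) v)) = (A ^ 2 * (1 + q * k)) * R := by
    rw [mnorm, m2, abs_of_nonneg (by positivity), Real.sqrt_mul (by positivity),
      Real.sqrt_sq (by positivity), hR]
  have hsq : Real.sqrt (A ^ 2 * (1 + q ^ 2)) = A * R := by
    rw [Real.sqrt_mul (by positivity), Real.sqrt_sq hA.le, hR]
  simp only []
  rw [m3, m1, hmn, hsq]
  have hPne : (1 + q * k) ≠ 0 := ne_of_gt hP0
  have hAne : A ≠ 0 := ne_of_gt hA
  have hQne : (1 + q ^ 2) ≠ 0 := ne_of_gt hQ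
  have hRne : R ≠ 0 := ne_of_gt hR0
  have hR3 : R ^ 3 = (1 + q ^ 2) * R := by
    rw [pow_succ, hR2]
  have e1 : A * ((A ^ 2 * (1 + q * k)) * R / (A * R) ^ 3) = (1 + q * k) / (1 + q ^ 2) := by
    rw [mul_pow, hR3]
    field_simp
  have e2 : (-(A * q)) * (A ^ 3 * (1 + q * k) ^ 2 * (k - q) / ((A ^ 2 * (1 + q * k)) * R) ^ 2)
      = -(q * (k - q)) / (1 + q ^ 2) := by
    rw [mul_pow, hR2]
    field_simp
  rw [e1, e2]
  rw [← add_div]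
  rw [div_eq_one_iff_eq (ne_of_gt hQ)]
  ring
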